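/- arXiv:1809.03791 — 2 statements merged into one kernel-verified Lean document; each statement's English description precedes it below -/
import Mathlib

section
/- A point p outside a convex polygon, whose full two-sided outer-billiard orbit is defined, is periodic if and only if its symbolic code ρ(p) (the bi-infinite sequence recording, at each time n, the index of the vertex cone V_{u_n} containing T^n(p)) is a periodic sequence, provided every iterate lies in the interior of some vertex cone. -/
/-! If the code is `k`-periodic, then along the orbit `T^{2k}` is a composition of an even
number of point reflections, i.e. a translation, by `v = o (2k) - o 0` at even times and by
`-v` at odd times; so whole rays `o n + ℕ • (±v)` stay in one vertex cone. This forces the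
vertices visited at even times to maximize `cross v` on `γ` and those at odd times to minimize
it. The height `cross v (o n)` then drops by `2 (max - min)` every two steps but returns to its
value after `2k` steps, so `cross v` is constant on `γ`, which for a set with interior means
`v = 0`. Conversely, a point determines its vertex cone and reflections in two distinct
vertices cannot send points of their cones to the same point, so the orbit of a periodic point
is periodic in both time directions and so is its code. -/
open Complex

noncomputable section

/-- Cross product of two planar vectors, viewed as complex numbers. -/
def cross (v w : ℂ) : ℝ := ((starRingEnd ℂ) v * w).im

/-- The interior of the vertex cone at the vertex `a` of the convex figure `γ`:
points `p` outside `γ` whose right tangent line touches `γ` exactly at `a`. -/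
def intVertexCone (γ : Set ℂ) (a : ℂ) : Set ℂ :=
  {p | p ∉ γ ∧ a ∈ γ ∧ ∀ x ∈ γ, x ≠ a → 0 < cross (a - p) (x - p)}

open Function Filter Topology

namespace OuterBilliard

lemma cross_eq (v w : ℂ) : cross v w = v.re * w.im - v.im * w.re := by
  simp only [cross, mul_im, conj_re, conj_im]; ring

lemma cross_self (v : ℂ) : cross v v = 0 := by
  rw [cross_eq]; ring

lemma cross_neg_left (v w : ℂ) : cross (-v) w = -cross v w := by
  simp only [cross_eq, neg_re, neg_im]; ring

lemma cross_add_right (v w w' : ℂ) : cross v (w + w') = cross v w + cross v w' := by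
  simp only [cross_eq, add_re, add_im]; ring

lemma cross_two_mul_sub_right (v a p : ℂ) :
    cross v (2 * a - p) = 2 * cross v a - cross v p := by
  simp only [cross_eq, sub_re, sub_im, mul_re, mul_im, re_ofNat, im_ofNat]; ring

lemma cross_add_mul_I_mul_self (v p : ℂ) (t : ℝ) :
    cross v (p + t * (I * v)) = cross v p + t * normSq v := by
  simp only [cross_eq, add_re, add_im, mul_re, mul_im, ofReal_re, ofReal_im, I_re, I_im,
    normSq_apply]
  ring

lemma cross_sub_add_mul (a p d x : ℂ) (t : ℝ) :
    cross (a - (p + t * d)) (x - (p + t * d)) = cross (a - p) (x - p) + t * cross d (a - x) := by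
  simp only [cross_eq, sub_re, sub_im, add_re, add_im, mul_re, mul_im, ofReal_re, ofReal_im]
  ring

lemma eq_zero_of_forall_cross_eq {s : Set ℂ} (hs : (interior s).Nonempty) {v : ℂ} {M : ℝ}
    (h : ∀ x ∈ s, cross v x = M) : v = 0 := by
  obtain ⟨p, hp⟩ := hs
  have hline : Tendsto (fun t : ℝ => p + t * (I * v)) (𝓝 0) (𝓝 p) := by
    have hcont : Continuous fun t : ℝ => p + t * (I * v) := by fun_prop
    simpa using hcont.tendsto 0
  have hnear : ∀ᶠ t : ℝ in 𝓝[≠] 0, p + t * (I * v) ∈ s :=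
    nhdsWithin_le_nhds <| (hline.eventually (isOpen_interior.mem_nhds hp)).mono
      fun _ ht => interior_subset ht
  obtain ⟨t, hts, ht0⟩ := (hnear.and self_mem_nhdsWithin).exists
  have hline_eq := h _ hts
  rw [cross_add_mul_I_mul_self, h p (interior_subset hp), add_eq_left] at hline_eq
  exact normSq_eq_zero.mp ((mul_eq_zero.mp hline_eq).resolve_left ht0)

lemma eq_of_mem_intVertexCone {γ : Set ℂ} {a b p : ℂ} (ha : p ∈ intVertexCone γ a)
    (hb : p ∈ intVertexCone γ b) : a = b := by
  by_contra hab
  have h₁ := ha.2.2 b hb.2.1 (Ne.symm hab)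
  have h₂ := hb.2.2 a ha.2.1 hab
  simp only [cross_eq, sub_re, sub_im] at h₁ h₂
  nlinarith

lemma eq_of_two_mul_sub_eq {γ : Set ℂ} {a b p q : ℂ} (hp : p ∈ intVertexCone γ a)
    (hq : q ∈ intVertexCone γ b) (h : 2 * a - p = 2 * b - q) : p = q := by
  by_cases hab : a = b
  · subst hab
    linear_combination -h
  · have h₁ := hp.2.2 b hq.2.1 (Ne.symm hab)
    have h₂ := hq.2.2 a hp.2.1 hab
    rw [show q = 2 * b - 2 * a + p by linear_combination h] at h₂
    simp only [cross_eq, sub_re, sub_im, add_re, add_im, mul_re, mul_im, re_ofNat,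
      im_ofNat] at h₁ h₂
    nlinarith

/-- Along the ray, `cross (a - p) (x - p)` changes by `j • cross d (a - x)`; staying positive
for all `j` forces `cross d (a - x) ≥ 0`. -/
lemma isMaxOn_cross_of_forall_nat_mul_mem {γ : Set ℂ} {a p d : ℂ}
    (h : ∀ j : ℕ, p + j * d ∈ intVertexCone γ a) : IsMaxOn (cross d) γ a := by
  refine isMaxOn_iff.mpr fun x hx => ?_
  by_cases hxa : x = a
  · exact hxa ▸ le_rfl
  by_contra hlt
  have hgap : cross d (a - x) < 0 := by
    simp only [cross_eq, sub_re, sub_im, not_le] at hlt ⊢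
    linarith
  obtain ⟨j, hj⟩ := exists_nat_gt (cross (a - p) (x - p) / -cross d (a - x))
  rw [div_lt_iff₀ (neg_pos.mpr hgap)] at hj
  have hpos := (h j).2.2 x hx hxa
  rw [← ofReal_natCast, cross_sub_add_mul] at hpos
  linarith

structure IsConeOrbit (γ : Set ℂ) (c o : ℤ → ℂ) : Prop where
  mem : ∀ n, o n ∈ intVertexCone γ (c n)
  succ : ∀ n, o (n + 1) = 2 * c n - o n

namespace IsConeOrbit

variable {γ : Set ℂ} {c o : ℤ → ℂ}

lemma succ_eq_succ_iff (h : IsConeOrbit γ c o) {a b : ℤ} :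
    o (a + 1) = o (b + 1) ↔ o a = o b := by
  rw [h.succ, h.succ]
  refine ⟨eq_of_two_mul_sub_eq (h.mem a) (h.mem b), fun hab => ?_⟩
  rw [hab, eq_of_mem_intVertexCone (a := c a) (hab ▸ h.mem a) (h.mem b)]

lemma periodic_of_eq (h : IsConeOrbit γ c o) {k : ℤ} (hk : o k = o 0) : Periodic o k := by
  intro n
  induction n using Int.induction_on with
  | zero => simpa using hk
  | succ i ih => rwa [add_right_comm, h.succ_eq_succ_iff]
  | pred i ih => rwa [← h.succ_eq_succ_iff, add_right_comm, sub_add_cancel]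

lemma periodic_center (h : IsConeOrbit γ c o) {k : ℤ} (ho : Periodic o k) : Periodic c k :=
  fun n => eq_of_mem_intVertexCone (ho n ▸ h.mem (n + k)) (h.mem n)

lemma drift_succ (h : IsConeOrbit γ c o) {P : ℤ} (hc : Periodic c P) (n : ℤ) :
    o (n + 1 + P) - o (n + 1) = -(o (n + P) - o n) := by
  rw [add_right_comm, h.succ, h.succ, hc]; ring

lemma drift_periodic (h : IsConeOrbit γ c o) {P : ℤ} (hc : Periodic c P) :
    Periodic (fun n => o (n + P) - o n) 2 := fun n => by
  show o (n + 2 + P) - o (n + 2) = o (n + P) - o n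
  rw [show n + 2 = n + 1 + 1 by ring, h.drift_succ hc, h.drift_succ hc, neg_neg]

lemma add_nat_mul_eq (h : IsConeOrbit γ c o) {k : ℕ} (hc : Periodic c (2 * k)) (n : ℤ)
    (j : ℕ) : o (n + j * (2 * k)) = o n + j * (o (n + 2 * k) - o n) := by
  have hd : Periodic (fun n => o (n + 2 * k) - o n) (2 * k) := by
    simpa only [mul_comm] using (h.drift_periodic hc).nat_mul k
  induction j with
  | zero => simp
  | succ j ih =>
    have hdj : o (n + j * (2 * k) + 2 * k) - o (n + j * (2 * k)) = o (n + 2 * k) - o n :=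
      hd.nat_mul j n
    push_cast
    rw [add_one_mul, ← add_assoc]
    linear_combination hdj + ih

lemma isMaxOn_cross_drift (h : IsConeOrbit γ c o) {k : ℕ} (hc : Periodic c (2 * k)) (n : ℤ) :
    IsMaxOn (cross (o (n + 2 * k) - o n)) γ (c n) :=
  isMaxOn_cross_of_forall_nat_mul_mem fun j => by
    rw [← h.add_nat_mul_eq hc, ← hc.nat_mul j n]
    exact h.mem _

lemma isMaxOn_isMinOn_cross (h : IsConeOrbit γ c o) {k : ℕ} (hc : Periodic c (2 * k))
    (j : ℤ) :
    IsMaxOn (cross (o (2 * k) - o 0)) γ (c (2 * j)) ∧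
      IsMinOn (cross (o (2 * k) - o 0)) γ (c (2 * j + 1)) := by
  have heven : o (2 * j + 2 * k) - o (2 * j) = o (2 * k) - o 0 := by
    simpa [mul_comm] using (h.drift_periodic hc).int_mul_eq j
  refine ⟨heven ▸ h.isMaxOn_cross_drift hc (2 * j), ?_⟩
  have hodd := (h.isMaxOn_cross_drift hc (2 * j + 1)).neg
  rw [h.drift_succ hc, heven] at hodd
  simpa only [cross_neg_left, neg_neg] using hodd

theorem eq_of_periodic_center (h : IsConeOrbit γ c o) (hs : (interior γ).Nonempty) {k : ℕ}
    (hk : 1 ≤ k) (hc : Periodic c k) : o (2 * k) = o 0 := by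
  have hc2 : Periodic c (2 * k) := by simpa using hc.nat_mul 2
  set v := o (2 * k) - o 0
  have hext := h.isMaxOn_isMinOn_cross hc2
  set M := cross v (c 0)
  set μ := cross v (c 1)
  have hM (j : ℤ) : cross v (c (2 * j)) = M :=
    le_antisymm (by simpa using (hext 0).1 (h.mem (2 * j)).2.1) ((hext j).1 (h.mem 0).2.1)
  have hμ (j : ℤ) : cross v (c (2 * j + 1)) = μ :=
    le_antisymm ((hext j).2 (h.mem 1).2.1) (by simpa using (hext 0).2 (h.mem (2 * j + 1)).2.1)
  have hheight (j : ℕ) : cross v (o (2 * j)) = cross v (o 0) + 2 * j * (μ - M) := by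
    induction j with
    | zero => simp
    | succ j ih =>
      have hsucc : 2 * ((j + 1 : ℕ) : ℤ) = 2 * j + 1 + 1 := by push_cast; ring
      rw [hsucc, h.succ, cross_two_mul_sub_right, hμ, h.succ, cross_two_mul_sub_right, hM, ih]
      push_cast; ring
  have hμM : μ = M := by
    have hreturn := hheight k
    rw [show o (2 * k) = o 0 + v by ring, cross_add_right, cross_self] at hreturn
    have hk' : (0 : ℝ) < k := by exact_mod_cast hk
    nlinarith
  have hconst : ∀ x ∈ γ, cross v x = M := fun x hx =>
    le_antisymm (by simpa using (hext 0).1 hx) (hμM ▸ by simpa using (hext 0).2 hx)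
  exact sub_eq_zero.mp (eq_zero_of_forall_cross_eq hs hconst)

end IsConeOrbit

end OuterBilliard

open OuterBilliard in
theorem stmt4_general (m : ℕ) (A : Fin m → ℂ) (hA : Function.Injective A)
    (γ : Set ℂ)
    (hint : (interior γ).Nonempty)
    (T : ℂ → ℂ)
    (hT : ∀ i : Fin m, ∀ p ∈ intVertexCone γ (A i), T p = 2 * A i - p)
    (o : ℤ → ℂ) (ho : ∀ n : ℤ, o (n + 1) = T (o n))
    (u : ℤ → Fin m) (hu : ∀ n : ℤ, o n ∈ intVertexCone γ (A (u n))) :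
    (∃ k : ℕ, 1 ≤ k ∧ o (k : ℤ) = o 0) ↔
      (∃ k : ℕ, 1 ≤ k ∧ ∀ n : ℤ, u (n + (k : ℤ)) = u n) := by
  have horbit : IsConeOrbit γ (fun n => A (u n)) o := ⟨hu, fun n => by rw [ho, hT _ _ (hu n)]⟩
  constructor
  · rintro ⟨k, hk, hreturn⟩
    exact ⟨k, hk, fun n => hA (horbit.periodic_center (horbit.periodic_of_eq hreturn) n)⟩
  · rintro ⟨k, hk, hcode⟩
    refine ⟨2 * k, by omega, ?_⟩
    exact_mod_cast horbit.eq_of_periodic_center hint hk fun n => congrArg A (hcode n)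

/-- For a convex polygon `γ` with vertices `A_0, …, A_{m-1}`, a point whose full
two-sided outer billiard orbit `o : ℤ → ℂ` is defined, with every iterate lying in the
interior of some vertex cone, is periodic if and only if its symbolic code
`u : ℤ → Fin m` (recording the cone containing each iterate) is a periodic sequence. -/
theorem stmt4 (m : ℕ) (A : Fin m → ℂ) (hA : Function.Injective A)
    (γ : Set ℂ) (hγ : γ = convexHull ℝ (Set.range A))
    (hint : (interior γ).Nonempty)
    (T : ℂ → ℂ)
    (hT : ∀ i : Fin m, ∀ p ∈ intVertexCone γ (A i), T p = 2 * A i - p)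
    (o : ℤ → ℂ) (ho : ∀ n : ℤ, o (n + 1) = T (o n))
    (u : ℤ → Fin m) (hu : ∀ n : ℤ, o n ∈ intVertexCone γ (A (u n))) :
    (∃ k : ℕ, 1 ≤ k ∧ o (k : ℤ) = o 0) ↔
      (∃ k : ℕ, 1 ≤ k ∧ ∀ n : ℤ, u (n + (k : ℤ)) = u n) :=
  stmt4_general m A hA γ hint T hT o ho u hu
end
end

section
/- If (Y_n) is a sequence of pairwise disjoint nonempty compact subsets of the plane converging (in Hausdorff distance) to a point y, and for each n all points of Y_n are periodic under a map T with the minimal period of points of Y_{n+3} at least twice the minimal period of points of Y_n, then y is not a periodic point of T, provided that every periodic point of T has a neighborhood in which all points except possibly one have the same period. -/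
open Function

noncomputable section

/-! The neighbourhood hypothesis at `y` gives a neighbourhood `V` of `y`, an exceptional point `c`
and a period `m₀` shared by every point of `V ∖ {c}`. Eventually `Y n ⊆ V`, and by disjointness
eventually `c ∉ Y n`, so the periods `P n` are eventually equal to `m₀`. This contradicts
`2 P n ≤ P (n + 3)`, since `P n ≥ 1`. -/

open Filter Topology

theorem Filter.Tendsto.eventually_subset_of_hausdorffEDist_singleton {ι α : Type*}
    [PseudoEMetricSpace α] {l : Filter ι} {Y : ι → Set α} {y : α}
    (h : Tendsto (fun n => Metric.hausdorffEDist (Y n) {y}) l (𝓝 0))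
    {V : Set α} (hV : V ∈ 𝓝 y) : ∀ᶠ n in l, Y n ⊆ V := by
  obtain ⟨ε, hε, hball⟩ := EMetric.mem_nhds_iff.1 hV
  filter_upwards [h.eventually_lt_const hε] with n hn x hx
  apply hball
  rw [Metric.mem_eball, ← Metric.infEDist_singleton]
  exact (Metric.infEDist_le_hausdorffEDist_of_mem hx).trans_lt hn

theorem Pairwise.eventually_cofinite_notMem_of_disjoint {ι α : Type*} {Y : ι → Set α}
    (h : Pairwise (Disjoint on Y)) (c : α) : ∀ᶠ i in cofinite, c ∉ Y i := by
  have hsub : {i | c ∈ Y i}.Subsingleton := fun i hi j hj => by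
    by_contra hij
    exact Set.disjoint_left.1 (h hij) hi hj
  simpa only [eventually_cofinite, not_not] using hsub.finite

theorem stmt8_general (T : ℂ → ℂ) (Y : ℕ → Set ℂ)
    (hne : ∀ n, (Y n).Nonempty)
    (hdisj : Pairwise (Disjoint on Y))
    (y : ℂ)
    (hconv : Filter.Tendsto (fun n => EMetric.hausdorffEdist (Y n) ({y} : Set ℂ))
      Filter.atTop (nhds 0))
    (P : ℕ → ℕ)
    (hP : ∀ n, ∀ p ∈ Y n, IsLeast {m : ℕ | 1 ≤ m ∧ T^[m] p = p} (P n))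
    (hgrow : ∀ n, 2 * P n ≤ P (n + 3))
    (hnbhd : ∀ q : ℂ, (∃ m : ℕ, 1 ≤ m ∧ T^[m] q = q) →
      ∃ V ∈ nhds q, ∃ c : ℂ, ∃ m₀ : ℕ,
        ∀ x ∈ V, x ≠ c → IsLeast {m : ℕ | 1 ≤ m ∧ T^[m] x = x} m₀) :
    ¬ ∃ m : ℕ, 1 ≤ m ∧ T^[m] y = y := by
  intro hy
  obtain ⟨V, hV, c, m₀, hVm⟩ := hnbhd y hy
  have hc : ∀ᶠ n in atTop, c ∉ Y n :=
    Nat.cofinite_eq_atTop ▸ hdisj.eventually_cofinite_notMem_of_disjoint c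
  have hPm₀ : ∀ᶠ n in atTop, P n = m₀ := by
    filter_upwards [hconv.eventually_subset_of_hausdorffEDist_singleton hV, hc]
      with n hYV hcY
    obtain ⟨p, hp⟩ := hne n
    exact (hP n p hp).unique (hVm p (hYV hp) (ne_of_mem_of_not_mem hp hcY))
  obtain ⟨n, hn, hn3⟩ := (hPm₀.and ((tendsto_add_atTop_nat 3).eventually hPm₀)).exists
  obtain ⟨p, hp⟩ := hne n
  have hpos : 1 ≤ P n := (hP n p hp).1.1
  have := hgrow n
  omega

/-- If `(Y n)` is a sequence of pairwise disjoint nonempty compact subsets of the plane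
converging in Hausdorff distance to a point `y`, all points of `Y n` are periodic under
`T` with common minimal period `P n`, and `P (n+3) ≥ 2 · P n` for all `n`, then `y` is
not periodic under `T` — provided every periodic point of `T` has a neighborhood all of
whose points, except possibly one, share the same minimal period. -/
theorem stmt8 (T : ℂ → ℂ) (Y : ℕ → Set ℂ)
    (hne : ∀ n, (Y n).Nonempty) (hcpt : ∀ n, IsCompact (Y n))
    (hdisj : Pairwise (Disjoint on Y))
    (y : ℂ)
    (hconv : Filter.Tendsto (fun n => EMetric.hausdorffEdist (Y n) ({y} : Set ℂ))
      Filter.atTop (nhds 0))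
    (P : ℕ → ℕ)
    (hP : ∀ n, ∀ p ∈ Y n, IsLeast {m : ℕ | 1 ≤ m ∧ T^[m] p = p} (P n))
    (hgrow : ∀ n, 2 * P n ≤ P (n + 3))
    (hnbhd : ∀ q : ℂ, (∃ m : ℕ, 1 ≤ m ∧ T^[m] q = q) →
      ∃ V ∈ nhds q, ∃ c : ℂ, ∃ m₀ : ℕ,
        ∀ x ∈ V, x ≠ c → IsLeast {m : ℕ | 1 ≤ m ∧ T^[m] x = x} m₀) :
    ¬ ∃ m : ℕ, 1 ≤ m ∧ T^[m] y = y :=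
  stmt8_general T Y hne hdisj y hconv P hP hgrow hnbhd
end
end
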